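/- The user-proposing deferred acceptance algorithm yields a user-optimal stable matching: every user weakly prefers its assignment under the DA outcome to its assignment under any other stable matching. -/

import Mathlib

open scoped Classical

/-- A many-to-one matching market: quotas, users' strict preference lists
(acceptable BSs in decreasing order of preference), and BSs' strict rankings
of users (lower rank = more preferred). -/
structure Market (M L : Type*) where
  quota : L → ℕ
  uPref : M → List L
  bRank : L → M → ℕ

namespace Market

variable {M L : Type*} [Fintype M] [Fintype L]

/-- User `m` strictly prefers BS `l` to BS `l'`. -/
noncomputable def uPrefers (mk : Market M L) (m : M) (l l' : L) : Prop :=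
  l ∈ mk.uPref m ∧
    (mk.uPref m).findIdx (fun x => decide (x = l)) <
      (mk.uPref m).findIdx (fun x => decide (x = l'))

/-- Keep the (up to) `q` best-ranked members of `s`. -/
noncomputable def topQ (q : ℕ) (rank : M → ℕ) (s : Finset M) : Finset M :=
  s.filter (fun m => (s.filter (fun m' => rank m' < rank m)).card < q)

/-- State of the deferred acceptance algorithm: for each user, the set of BSs
it has already proposed to, and for each BS, the set of users it tentatively holds. -/
structure DAState (M L : Type*) where
  proposed : M → Finset L
  hold : L → Finset M

/-- The most preferred BS that user `m` has not yet proposed to. -/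
noncomputable def nextProposal (mk : Market M L) (s : DAState M L) (m : M) : Option L :=
  (mk.uPref m).find? (fun l => decide (l ∉ s.proposed m))

/-- A user is (tentatively) matched if some BS holds it. -/
def matched (s : DAState M L) (m : M) : Prop := ∃ l, m ∈ s.hold l

/-- Users proposing to BS `l` in the current round. -/
noncomputable def proposalsTo (mk : Market M L) (s : DAState M L) (l : L) : Finset M :=
  Finset.univ.filter (fun m => ¬ matched s m ∧ nextProposal mk s m = some l)

/-- One round of user-proposing deferred acceptance: every unmatched user proposes
to its most preferred BS not yet proposed to; every BS keeps the best applicants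
up to its quota (among current holds and new proposers) and rejects the rest. -/
noncomputable def step (mk : Market M L) (s : DAState M L) : DAState M L where
  proposed := fun m =>
    if matched s m then s.proposed m
    else
      match nextProposal mk s m with
      | some l => insert l (s.proposed m)
      | none => s.proposed m
  hold := fun l => topQ (mk.quota l) (mk.bRank l) (s.hold l ∪ proposalsTo mk s l)

/-- The run of the deferred acceptance algorithm from the empty initial state. -/
noncomputable def run (mk : Market M L) : ℕ → DAState M L
  | 0 => ⟨fun _ => ∅, fun _ => ∅⟩
  | n + 1 => step mk (run mk n)

/-- `μ` is a feasible many-to-one matching: quotas respected, each user assigned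
to at most one BS. -/
def IsMatching (mk : Market M L) (μ : L → Finset M) : Prop :=
  (∀ l, (μ l).card ≤ mk.quota l) ∧ ∀ m l l', m ∈ μ l → m ∈ μ l' → l = l'

/-- Individual rationality: every user is assigned only to an acceptable BS. -/
def IndivRational (mk : Market M L) (μ : L → Finset M) : Prop :=
  ∀ l m, m ∈ μ l → l ∈ mk.uPref m

/-- `(m, l)` is a blocking pair for `μ`: `l` is acceptable to `m`, `m` is not
assigned to `l` and strictly prefers `l` to its assignment (if any), and `l`
either has a free slot or strictly prefers `m` to one of its assigned users. -/
def Blocks (mk : Market M L) (μ : L → Finset M) (m : M) (l : L) : Prop :=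
  l ∈ mk.uPref m ∧ m ∉ μ l ∧ (∀ l', m ∈ μ l' → mk.uPrefers m l l') ∧
    ((μ l).card < mk.quota l ∨ ∃ m' ∈ μ l, mk.bRank l m < mk.bRank l m')

/-- Stability: feasible, individually rational, and no blocking pair. -/
def IsStable (mk : Market M L) (μ : L → Finset M) : Prop :=
  IsMatching mk μ ∧ IndivRational mk μ ∧ ∀ m l, ¬ Blocks mk μ m l

end Market

/-!
Fix a stable matching `μ`. Along the run of deferred acceptance no user is ever rejected by
its `μ`-partner: if the BS `l` with `m ∈ μ l` rejected `m`, it would hold `quota l`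
applicants that it ranks above `m`, so one of them, `m'`, is not matched to `l` by `μ`. Since
users propose in decreasing order of preference and `m'` has not been rejected by its own
`μ`-partner, `m'` prefers `l` to that partner, and `(m', l)` blocks `μ`. At a fixed point of
the algorithm an unmatched user has proposed to every acceptable BS, so every user matched by
`μ` is held by some BS, which it weakly prefers to its `μ`-partner because it proposed to it
first.
-/

theorem List.not_of_idxOf_lt_of_find?_eq_some {α : Type*} [BEq α] [LawfulBEq α] {xs : List α}
    {p : α → Bool} {a b : α} (hb : xs.find? p = some b) (ha : a ∈ xs)
    (hab : xs.idxOf a < xs.idxOf b) : p a = false := by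
  obtain ⟨hpb, as, bs, rfl, has⟩ := List.find?_eq_some_iff_append.1 hb
  have hbas : b ∉ as := fun h => by simpa [hpb] using has b h
  rw [List.idxOf_append, List.idxOf_append, if_neg hbas] at hab
  split_ifs at hab with haas
  · simpa using has a haas
  · simp at hab

namespace Market

variable {M L : Type*} {mk : Market M L} {m : M} {l l' : L}

theorem uPrefers_iff_idxOf_lt :
    mk.uPrefers m l l' ↔ l ∈ mk.uPref m ∧ (mk.uPref m).idxOf l < (mk.uPref m).idxOf l' :=
  Iff.rfl

theorem not_uPrefers_self : ¬ mk.uPrefers m l l :=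
  fun h => (lt_irrefl _) (uPrefers_iff_idxOf_lt.1 h).2

theorem uPrefers_trichotomous (hl : l ∈ mk.uPref m) (hl' : l' ∈ mk.uPref m) :
    l = l' ∨ mk.uPrefers m l l' ∨ mk.uPrefers m l' l := by
  simp only [uPrefers_iff_idxOf_lt, hl, hl', true_and]
  rcases lt_trichotomy ((mk.uPref m).idxOf l) ((mk.uPref m).idxOf l') with h | h | h
  · exact Or.inr (Or.inl h)
  · exact Or.inl ((List.idxOf_inj hl).1 h)
  · exact Or.inr (Or.inr h)

variable {s : DAState M L}

theorem nextProposal_mem_uPref (h : nextProposal mk s m = some l) : l ∈ mk.uPref m :=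
  List.mem_of_find?_eq_some h

theorem nextProposal_not_mem_proposed (h : nextProposal mk s m = some l) :
    l ∉ s.proposed m := by
  simpa using List.find?_some h

theorem mem_proposed_of_uPrefers_nextProposal (h : nextProposal mk s m = some l)
    (hpref : mk.uPrefers m l' l) : l' ∈ s.proposed m := by
  simpa using List.not_of_idxOf_lt_of_find?_eq_some h hpref.1 hpref.2

structure Consistent (mk : Market M L) (s : DAState M L) : Prop where
  eq_of_mem_hold : ∀ {m l l'}, m ∈ s.hold l → m ∈ s.hold l' → l = l'
  mem_proposed_of_mem_hold : ∀ {m l}, m ∈ s.hold l → l ∈ s.proposed m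
  mem_uPref_of_mem_proposed : ∀ {m l}, l ∈ s.proposed m → l ∈ mk.uPref m
  mem_proposed_of_uPrefers : ∀ {m l l'}, l' ∈ s.proposed m → mk.uPrefers m l l' →
    l ∈ s.proposed m

def HoldsPartners (μ : L → Finset M) (s : DAState M L) : Prop :=
  ∀ {m l}, m ∈ μ l → l ∈ s.proposed m → m ∈ s.hold l

theorem Consistent.not_uPrefers_partner (hs : Consistent mk s)
    {μ : L → Finset M} (hp : HoldsPartners μ s) (hml : m ∈ μ l) (hl' : m ∈ s.hold l') :
    ¬ mk.uPrefers m l l' := by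
  intro hpref
  have hl : m ∈ s.hold l :=
    hp hml (hs.mem_proposed_of_uPrefers (hs.mem_proposed_of_mem_hold hl') hpref)
  exact not_uPrefers_self (hs.eq_of_mem_hold hl hl' ▸ hpref)

variable [Fintype M]

theorem mem_proposalsTo :
    m ∈ proposalsTo mk s l ↔ ¬ matched s m ∧ nextProposal mk s m = some l := by
  simp [proposalsTo]

theorem mem_proposed_step :
    l ∈ (step mk s).proposed m ↔
      l ∈ s.proposed m ∨ (¬ matched s m ∧ nextProposal mk s m = some l) := by
  by_cases hm : matched s m
  · simp [step, hm]
  · cases hnext : nextProposal mk s m <;> simp [step, hm, hnext, eq_comm, or_comm]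

theorem mem_proposed_of_step_eq_self (hfix : step mk s = s) (hm : ¬ matched s m)
    (hl : l ∈ mk.uPref m) : l ∈ s.proposed m := by
  cases hnext : nextProposal mk s m with
  | none => simpa using List.find?_eq_none.1 hnext l hl
  | some l₀ =>
    have hl₀ : l₀ ∈ (step mk s).proposed m := mem_proposed_step.2 (Or.inr ⟨hm, hnext⟩)
    exact absurd (hfix ▸ hl₀) (nextProposal_not_mem_proposed hnext)

noncomputable def applicants (mk : Market M L) (s : DAState M L) (l : L) : Finset M :=
  s.hold l ∪ proposalsTo mk s l

theorem mem_hold_step :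
    m ∈ (step mk s).hold l ↔ m ∈ applicants mk s l ∧
      {m' ∈ applicants mk s l | mk.bRank l m' < mk.bRank l m}.card < mk.quota l := by
  simp [step, topQ, applicants]

namespace Consistent

variable (hs : Consistent mk s)
include hs

theorem mem_proposed_step_of_mem_applicants (h : m ∈ applicants mk s l) :
    l ∈ (step mk s).proposed m := by
  rcases Finset.mem_union.1 h with h | h
  · exact mem_proposed_step.2 (Or.inl (hs.mem_proposed_of_mem_hold h))
  · exact mem_proposed_step.2 (Or.inr (mem_proposalsTo.1 h))

theorem mem_uPref_of_mem_applicants (h : m ∈ applicants mk s l) : l ∈ mk.uPref m := by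
  rcases Finset.mem_union.1 h with h | h
  · exact hs.mem_uPref_of_mem_proposed (hs.mem_proposed_of_mem_hold h)
  · exact nextProposal_mem_uPref (mem_proposalsTo.1 h).2

theorem mem_proposed_of_mem_applicants_of_uPrefers (h : m ∈ applicants mk s l)
    (hpref : mk.uPrefers m l' l) : l' ∈ s.proposed m := by
  rcases Finset.mem_union.1 h with h | h
  · exact hs.mem_proposed_of_uPrefers (hs.mem_proposed_of_mem_hold h) hpref
  · exact mem_proposed_of_uPrefers_nextProposal (mem_proposalsTo.1 h).2 hpref

theorem step : Consistent mk (step mk s) where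
  eq_of_mem_hold {m l l'} hl hl' := by
    rcases Finset.mem_union.1 (mem_hold_step.1 hl).1 with h | h <;>
      rcases Finset.mem_union.1 (mem_hold_step.1 hl').1 with h' | h'
    · exact hs.eq_of_mem_hold h h'
    · exact absurd ⟨l, h⟩ (mem_proposalsTo.1 h').1
    · exact absurd ⟨l', h'⟩ (mem_proposalsTo.1 h).1
    · exact Option.some.inj ((mem_proposalsTo.1 h).2.symm.trans (mem_proposalsTo.1 h').2)
  mem_proposed_of_mem_hold h := hs.mem_proposed_step_of_mem_applicants (mem_hold_step.1 h).1
  mem_uPref_of_mem_proposed h := by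
    rcases mem_proposed_step.1 h with h | ⟨-, h⟩
    · exact hs.mem_uPref_of_mem_proposed h
    · exact nextProposal_mem_uPref h
  mem_proposed_of_uPrefers h hpref := by
    refine mem_proposed_step.2 (Or.inl ?_)
    rcases mem_proposed_step.1 h with h | ⟨-, h⟩
    · exact hs.mem_proposed_of_uPrefers h hpref
    · exact mem_proposed_of_uPrefers_nextProposal h hpref

variable {μ : L → Finset M} (hp : HoldsPartners μ s)
include hp

theorem uPrefers_of_mem_applicants (hIR : IndivRational mk μ) (h : m ∈ applicants mk s l)
    (hml' : m ∈ μ l') (hne : l' ≠ l) : mk.uPrefers m l l' := by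
  rcases uPrefers_trichotomous (hs.mem_uPref_of_mem_applicants h) (hIR l' m hml') with
    heq | hpref | hpref
  · exact absurd heq.symm hne
  · exact hpref
  · have hheld : m ∈ s.hold l' := hp hml' (hs.mem_proposed_of_mem_applicants_of_uPrefers h hpref)
    rcases Finset.mem_union.1 h with h | h
    · exact absurd (hs.eq_of_mem_hold hheld h) hne
    · exact absurd ⟨l', hheld⟩ (mem_proposalsTo.1 h).1

theorem mem_hold_step_of_partner (hμ : IsStable mk μ) (hml : m ∈ μ l)
    (happ : m ∈ applicants mk s l) : m ∈ (Market.step mk s).hold l := by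
  refine mem_hold_step.2 ⟨happ, ?_⟩
  by_contra! hfull
  have hcard : ((μ l).erase m).card <
      {m' ∈ applicants mk s l | mk.bRank l m' < mk.bRank l m}.card := by
    have hquota := hμ.1.1 l
    have hpos := Finset.card_pos.2 ⟨m, hml⟩
    rw [Finset.card_erase_of_mem hml]
    omega
  obtain ⟨m', hm'better, hm'⟩ := Finset.exists_mem_notMem_of_card_lt_card hcard
  obtain ⟨hm'app, hrank⟩ := Finset.mem_filter.1 hm'better
  have hm'l : m' ∉ μ l := fun h =>
    hm' (Finset.mem_erase.2 ⟨by rintro rfl; exact lt_irrefl _ hrank, h⟩)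
  exact hμ.2.2 m' l ⟨hs.mem_uPref_of_mem_applicants hm'app, hm'l,
    fun l'' hl'' => hs.uPrefers_of_mem_applicants hp hμ.2.1 hm'app hl''
      (by rintro rfl; exact hm'l hl''),
    Or.inr ⟨m, hml, hrank⟩⟩

theorem holdsPartners_step (hμ : IsStable mk μ) : HoldsPartners μ (Market.step mk s) := by
  intro m l hml hprop
  refine hs.mem_hold_step_of_partner hp hμ hml ?_
  by_cases hprev : l ∈ s.proposed m
  · exact Finset.mem_union_left _ (hp hml hprev)
  · rcases mem_proposed_step.1 hprop with h | h
    · exact absurd h hprev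
    · exact Finset.mem_union_right _ (mem_proposalsTo.2 h)

end Consistent

theorem consistent_run (mk : Market M L) (n : ℕ) : Consistent mk (run mk n) := by
  induction n with
  | zero => constructor <;> simp [run]
  | succ n ih => exact ih.step

theorem holdsPartners_run {μ : L → Finset M} (hμ : IsStable mk μ) (n : ℕ) :
    HoldsPartners μ (run mk n) := by
  induction n with
  | zero => simp [HoldsPartners, run]
  | succ n ih => exact (consistent_run mk n).holdsPartners_step ih hμ

end Market

theorem da_user_optimal_general {M L : Type*} [Fintype M] (mk : Market M L)
    (n : ℕ) (hterm : Market.step mk (Market.run mk n) = Market.run mk n)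
    (μ : L → Finset M) (hstable : Market.IsStable mk μ) :
    ∀ m l, m ∈ μ l →
      ∃ l', m ∈ (Market.run mk n).hold l' ∧
        (l' = l ∨ Market.uPrefers mk m l' l) := by
  intro m l hml
  have hs := Market.consistent_run mk n
  have hp : Market.HoldsPartners μ (Market.run mk n) := Market.holdsPartners_run hstable n
  have hl : l ∈ mk.uPref m := hstable.2.1 l m hml
  obtain ⟨l', hl'⟩ : Market.matched (Market.run mk n) m := by
    by_contra hunmatched
    exact hunmatched ⟨l, hp hml (Market.mem_proposed_of_step_eq_self hterm hunmatched hl)⟩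
  refine ⟨l', hl', ?_⟩
  rcases Market.uPrefers_trichotomous
      (hs.mem_uPref_of_mem_proposed (hs.mem_proposed_of_mem_hold hl')) hl with h | h | h
  · exact Or.inl h
  · exact Or.inr h
  · exact absurd h (hs.not_uPrefers_partner hp hml hl')

/-- User-optimality of user-proposing deferred acceptance: for
every stable matching μ, every user weakly prefers its DA assignment to its
assignment under μ (if μ matches m to l, then DA matches m to some l' that m
weakly prefers to l). -/
theorem da_user_optimal {M L : Type*} [Fintype M] [Fintype L] (mk : Market M L)
    (hU : ∀ m, (mk.uPref m).Nodup) (hB : ∀ l, Function.Injective (mk.bRank l))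
    (n : ℕ) (hterm : Market.step mk (Market.run mk n) = Market.run mk n)
    (μ : L → Finset M) (hstable : Market.IsStable mk μ) :
    ∀ m l, m ∈ μ l →
      ∃ l', m ∈ (Market.run mk n).hold l' ∧
        (l' = l ∨ Market.uPrefers mk m l' l) :=
  da_user_optimal_general mk n hterm μ hstable
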